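/- arXiv:2010.11151 — 6 statements merged into one kernel-verified Lean document; each statement's English description precedes it below -/
import Mathlib

section
/- Consider the Q-REPS optimization problem: maximize ⟨p,r⟩ − (1/η)·D(p‖p₀) − (1/α)·H(d‖d₀) over probability distributions p, d on 𝒳×𝒜 subject to Σ_a d(x,a) = γ·Σ_{x',a'} P(x|x',a')·p(x',a') + (1−γ)·ν₀(x) for all x ∈ 𝒳, and Σ_{x,a} d(x,a)·φ(x,a) = Σ_{x,a} p(x,a)·φ(x,a). Then an optimal solution (p*, d*) is given by p*(x,a) = p₀(x,a)·e^{η·Δ_{θ*}(x,a)} / (Σ_{x',a'} p₀(x',a')·e^{η·Δ_{θ*}(x',a')}) and d*(x,a) = ω(x)·π₀(a|x)·e^{α·(Q_{θ*}(x,a) − V_{θ*}(x))}, where ω(x) = γ·Σ_{x',a'} P(x|x',a')·p*(x',a') + (1−γ)·ν₀(x) and θ* is any minimizer of the convex function G(θ) = (1/η)·log(Σ_{x,a} p₀(x,a)·e^{η·Δ_θ(x,a)}) + (1−γ)·Σ_x ν₀(x)·V_θ(x). -/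
/-!
Weak duality with equality at the Gibbs pair. For a feasible `(p, d)` and any `θ`, the flow and
feature constraints rewrite `⟨p, r⟩` as `⟨p, Δ_θ⟩ + Σ_x (⟨d(x, ·), Q_θ(x, ·)⟩ - d(x) V_θ(x))
+ (1 - γ) ⟨ν₀, V_θ⟩`, where `d(x) = Σ_a d(x, a)`. The objective then splits into a Gibbs
variational expression in `p`, at most `(1/η) log Σ p₀ e^{η Δ_θ}`, and one in each conditional
`d(· | x)`, at most `d(x) V_θ(x)`; so `J(p, d) ≤ G(θ)`. Both bounds are attained exactly by the
Gibbs distributions `p*` and `d*`. Finally, the derivative of `G` at `θ*` along the `i`-th axis is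
`E_{d*} φ_i - E_{p*} φ_i`, so minimality of `θ*` is precisely the feature constraint for
`(p*, d*)`, which therefore is feasible with `J(p*, d*) = G(θ*)`.
-/

open Real Finset

section Gibbs

variable {ι : Type*} [Fintype ι]

theorem sub_le_mul_log_div {p q : ℝ} (hp : 0 ≤ p) (hq : 0 < q) : p - q ≤ p * log (p / q) := by
  have h := mul_nonneg hq.le (InformationTheory.klFun_nonneg (div_nonneg hp hq.le))
  have : q * InformationTheory.klFun (p / q) = p * log (p / q) + q - p := by
    rw [InformationTheory.klFun_apply]
    field_simp
  linarith

theorem sum_mul_sub_mul_log_div_le_log_sum_mul_exp {p μ : ι → ℝ} (f : ι → ℝ)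
    (hp : ∀ i, 0 ≤ p i) (hp1 : ∑ i, p i = 1) (hμ : ∀ i, 0 < μ i) :
    ∑ i, (p i * f i - p i * log (p i / μ i)) ≤ log (∑ i, μ i * exp (f i)) := by
  have : Nonempty ι := by
    by_contra h
    simp [not_nonempty_iff.mp h] at hp1
  set Z := ∑ i, μ i * exp (f i)
  have hZ : 0 < Z := sum_pos (fun i _ => mul_pos (hμ i) (exp_pos _)) univ_nonempty
  have hg : ∀ i, 0 < μ i * exp (f i) / Z := fun i => div_pos (mul_pos (hμ i) (exp_pos _)) hZ
  have key : ∀ i, p i * f i - p i * log (p i / μ i)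
      = p i * log Z - p i * log (p i / (μ i * exp (f i) / Z)) := by
    intro i
    rcases (hp i).eq_or_lt with h | h
    · simp [← h]
    · rw [log_div h.ne' (hg i).ne', log_div (mul_pos (hμ i) (exp_pos _)).ne' hZ.ne',
        log_mul (hμ i).ne' (exp_pos _).ne', log_exp, log_div h.ne' (hμ i).ne']
      ring
  calc ∑ i, (p i * f i - p i * log (p i / μ i))
      = ∑ i, (p i * log Z - p i * log (p i / (μ i * exp (f i) / Z))) :=
        sum_congr rfl fun i _ => key i
    _ ≤ ∑ i, (p i * log Z - (p i - μ i * exp (f i) / Z)) :=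
        sum_le_sum fun i _ => by linarith [sub_le_mul_log_div (hp i) (hg i)]
    _ = log Z := by
        rw [sum_sub_distrib, ← sum_mul, hp1, sum_sub_distrib, hp1, ← sum_div, div_self hZ.ne']
        ring

theorem sum_mul_sub_mul_log_div_eq_log_sum_mul_exp [Nonempty ι] {p μ : ι → ℝ} (f : ι → ℝ)
    (hμ : ∀ i, 0 < μ i) (hp : ∀ i, p i = μ i * exp (f i) / ∑ j, μ j * exp (f j)) :
    ∑ i, (p i * f i - p i * log (p i / μ i)) = log (∑ i, μ i * exp (f i)) := by
  set Z := ∑ i, μ i * exp (f i)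
  have hZ : 0 < Z := sum_pos (fun i _ => mul_pos (hμ i) (exp_pos _)) univ_nonempty
  have hp1 : ∑ i, p i = 1 := by
    simp_rw [hp]
    rw [← sum_div, div_self hZ.ne']
  have hterm : ∀ i, p i * f i - p i * log (p i / μ i) = p i * log Z := by
    intro i
    rw [hp i, show μ i * exp (f i) / Z / μ i = exp (f i) / Z by field_simp [(hμ i).ne'],
      log_div (exp_pos _).ne' hZ.ne', log_exp]
    ring
  rw [sum_congr rfl fun i _ => hterm i, ← sum_mul, hp1, one_mul]

theorem sum_mul_sub_mul_log_div_sum_le {d μ : ι → ℝ} (f : ι → ℝ)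
    (hd : ∀ i, 0 ≤ d i) (hμ : ∀ i, 0 < μ i) :
    ∑ i, (d i * f i - d i * log (d i / (∑ j, d j) / μ i)) ≤
      (∑ j, d j) * log (∑ i, μ i * exp (f i)) := by
  rcases (sum_nonneg fun i _ => hd i : 0 ≤ ∑ j, d j).eq_or_lt with hs | hs
  · have hd0 : ∀ i, d i = 0 := fun i =>
      (sum_eq_zero_iff_of_nonneg fun i _ => hd i).mp hs.symm i (mem_univ i)
    simp [hd0]
  · have h := sum_mul_sub_mul_log_div_le_log_sum_mul_exp f (fun i => div_nonneg (hd i) hs.le)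
      (by rw [← sum_div, div_self hs.ne']) hμ
    calc ∑ i, (d i * f i - d i * log (d i / (∑ j, d j) / μ i))
        = (∑ j, d j) * ∑ i, (d i / (∑ j, d j) * f i
            - d i / (∑ j, d j) * log (d i / (∑ j, d j) / μ i)) := by
          rw [mul_sum]
          exact sum_congr rfl fun i _ => by field_simp
      _ ≤ (∑ j, d j) * log (∑ i, μ i * exp (f i)) := mul_le_mul_of_nonneg_left h hs.le

theorem sum_mul_sub_mul_log_div_sum_eq_zero {d μ f : ι → ℝ} (w : ℝ)
    (hZ : ∑ i, μ i * exp (f i) = 1) (hd : ∀ i, d i = w * (μ i * exp (f i)))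
    (hμ : ∀ i, 0 < μ i) :
    ∑ i, (d i * f i - d i * log (d i / (∑ j, d j) / μ i)) = 0 := by
  have hs : ∑ j, d j = w := by
    simp_rw [hd]
    rw [← mul_sum, hZ, mul_one]
  refine sum_eq_zero fun i _ => ?_
  rcases eq_or_ne w 0 with hw | hw
  · simp [hd i, hw]
  · rw [hs, hd i, show w * (μ i * exp (f i)) / w / μ i = exp (f i) by
      field_simp [(hμ i).ne'], log_exp]
    ring

end Gibbs

theorem sum_sum_mul_sum_eq_of_sum_sum_mul_eq {X A ι : Type*} [Fintype X] [Fintype A] [Fintype ι]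
    {p d : X → A → ℝ} {φ : X → A → ι → ℝ}
    (h : ∀ i, ∑ x, ∑ a, d x a * φ x a i = ∑ x, ∑ a, p x a * φ x a i) (θ : ι → ℝ) :
    ∑ x, ∑ a, p x a * ∑ i, θ i * φ x a i = ∑ x, ∑ a, d x a * ∑ i, θ i * φ x a i := by
  have hswap : ∀ p : X → A → ℝ,
      ∑ x, ∑ a, p x a * ∑ i, θ i * φ x a i = ∑ i, θ i * ∑ x, ∑ a, p x a * φ x a i := by
    intro p
    simp_rw [mul_sum, mul_left_comm (p _ _)]
    exact (sum_congr rfl fun x _ => sum_comm).trans sum_comm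
  rw [hswap, hswap]
  simp_rw [h]

noncomputable section

namespace QREPS

variable {X A : Type*}

section SoftValue

variable [Fintype A] (α : ℝ) (π₀ : X → A → ℝ)

def softValue (q : X → A → ℝ) (x : X) : ℝ :=
  1 / α * log (∑ a, π₀ x a * exp (α * q x a))

def softPolicy (q : X → A → ℝ) (x : X) (a : A) : ℝ :=
  π₀ x a * exp (α * (q x a - softValue α π₀ q x))

variable {α π₀} [Nonempty A]

theorem exp_mul_softValue (hα : α ≠ 0) (hπ₀ : ∀ x a, 0 < π₀ x a) (q : X → A → ℝ) (x : X) :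
    exp (α * softValue α π₀ q x) = ∑ a, π₀ x a * exp (α * q x a) := by
  rw [softValue, ← mul_assoc, mul_one_div_cancel hα, one_mul, exp_log]
  exact sum_pos (fun a _ => mul_pos (hπ₀ x a) (exp_pos _)) univ_nonempty

theorem sum_softPolicy (hα : α ≠ 0) (hπ₀ : ∀ x a, 0 < π₀ x a) (q : X → A → ℝ) (x : X) :
    ∑ a, softPolicy α π₀ q x a = 1 := by
  simp_rw [softPolicy, mul_sub, exp_sub, ← mul_div_assoc]
  rw [← sum_div, ← exp_mul_softValue hα hπ₀, div_self (exp_pos _).ne']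

theorem hasDerivAt_softValue (hα : α ≠ 0) (hπ₀ : ∀ x a, 0 < π₀ x a) (q ψ : X → A → ℝ) (x : X) :
    HasDerivAt (fun t : ℝ => softValue α π₀ (q + t • ψ) x)
      (∑ a, softPolicy α π₀ q x a * ψ x a) 0 := by
  have hterm : ∀ a, HasDerivAt (fun t : ℝ => π₀ x a * exp (α * (q x a + t * ψ x a)))
      (π₀ x a * (exp (α * (q x a + 0 * ψ x a)) * (α * ψ x a))) 0 := fun a => by
    simpa using ((((hasDerivAt_id (0 : ℝ)).mul_const (ψ x a)).const_add (q x a)).const_mul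
      α).exp.const_mul (π₀ x a)
  have hZ : ∑ a, π₀ x a * exp (α * (q x a + 0 * ψ x a)) ≠ 0 := by
    simp_rw [zero_mul, add_zero, ← exp_mul_softValue hα hπ₀]
    exact (exp_pos _).ne'
  refine (((HasDerivAt.fun_sum fun a _ => hterm a).log hZ).const_mul (1 / α)).congr_deriv ?_
  simp_rw [zero_mul, add_zero]
  rw [← exp_mul_softValue hα hπ₀, sum_div, mul_sum]
  refine sum_congr rfl fun a _ => ?_
  rw [softPolicy, mul_sub, exp_sub]
  field_simp

end SoftValue

section Flow

variable [Fintype X] (P : X → A → X → ℝ) (r : X → A → ℝ) (γ : ℝ) (ν₀ : X → ℝ)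

def bellmanError (v : X → ℝ) (q : X → A → ℝ) (x : X) (a : A) : ℝ :=
  r x a + γ * ∑ x', P x a x' * v x' - q x a

def bellmanFlow [Fintype A] (p : X → A → ℝ) (x : X) : ℝ :=
  γ * ∑ x', ∑ a', P x' a' x * p x' a' + (1 - γ) * ν₀ x

variable {P γ ν₀} [Fintype A]

theorem sum_bellmanFlow_mul (p : X → A → ℝ) (v : X → ℝ) :
    ∑ x, bellmanFlow P γ ν₀ p x * v x
      = γ * ∑ x, ∑ a, p x a * ∑ x', P x a x' * v x' + (1 - γ) * ∑ x, ν₀ x * v x := by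
  simp only [bellmanFlow, add_mul, sum_add_distrib, mul_assoc, ← mul_sum, sum_mul]
  congr 2
  rw [sum_comm]
  refine sum_congr rfl fun x _ => ?_
  rw [sum_comm]
  refine sum_congr rfl fun a _ => ?_
  rw [mul_sum]
  exact sum_congr rfl fun x' _ => by ring

theorem sum_bellmanFlow (hP : ∀ x a, ∑ x', P x a x' = 1) (hν₀ : ∑ x, ν₀ x = 1)
    {p : X → A → ℝ} (hp : ∑ x, ∑ a, p x a = 1) :
    ∑ x, bellmanFlow P γ ν₀ p x = 1 := by
  simpa [hP, hp, hν₀] using sum_bellmanFlow_mul (P := P) (γ := γ) (ν₀ := ν₀) p 1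

theorem bellmanFlow_nonneg (hγ₀ : 0 ≤ γ) (hγ₁ : γ ≤ 1) (hP : ∀ x a x', 0 ≤ P x a x')
    (hν₀ : ∀ x, 0 ≤ ν₀ x) {p : X → A → ℝ} (hp : ∀ x a, 0 ≤ p x a) (x : X) :
    0 ≤ bellmanFlow P γ ν₀ p x :=
  add_nonneg (mul_nonneg hγ₀ (sum_nonneg fun x' _ => sum_nonneg fun a' _ =>
    mul_nonneg (hP x' a' x) (hp x' a'))) (mul_nonneg (sub_nonneg.2 hγ₁) (hν₀ x))

end Flow

variable [Fintype X] [Fintype A]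
  (P : X → A → X → ℝ) (r : X → A → ℝ) (γ α η : ℝ) (ν₀ : X → ℝ) (p₀ π₀ : X → A → ℝ)

def logisticBellmanError (q : X → A → ℝ) : ℝ :=
  1 / η * log (∑ x, ∑ a, p₀ x a * exp (η * bellmanError P r γ (softValue α π₀ q) q x a))
    + (1 - γ) * ∑ x, ν₀ x * softValue α π₀ q x

/-- For probability vectors `p` and `p₀` the unnormalized relative entropy `D(p‖p₀)` reduces to the
second sum; `π₀` plays the role of `π_{d₀}`. -/
def objective (p d : X → A → ℝ) : ℝ :=
  ∑ x, ∑ a, p x a * r x a - 1 / η * ∑ x, ∑ a, p x a * log (p x a / p₀ x a)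
    - 1 / α * ∑ x, ∑ a, d x a * log (d x a / (∑ a', d x a') / π₀ x a)

variable {P r γ α η ν₀ p₀ π₀}

theorem sum_eq_bellmanFlow_of_eq_mul_softPolicy [Nonempty A] (hα : α ≠ 0)
    (hπ₀ : ∀ x a, 0 < π₀ x a) {q ps ds : X → A → ℝ}
    (hds : ∀ x a, ds x a = bellmanFlow P γ ν₀ ps x * softPolicy α π₀ q x a) (x : X) :
    ∑ a, ds x a = bellmanFlow P γ ν₀ ps x := by
  simp_rw [hds, ← mul_sum, sum_softPolicy hα hπ₀, mul_one]

theorem objective_eq (hα : α ≠ 0) (hη : η ≠ 0) {p d : X → A → ℝ} (q : X → A → ℝ) (v : X → ℝ)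
    (hflow : ∀ x, ∑ a, d x a = bellmanFlow P γ ν₀ p x)
    (hq : ∑ x, ∑ a, p x a * q x a = ∑ x, ∑ a, d x a * q x a) :
    objective r α η p₀ π₀ p d
      = 1 / η * ∑ x, ∑ a, (p x a * (η * bellmanError P r γ v q x a)
          - p x a * log (p x a / p₀ x a))
        + 1 / α * ∑ x, ∑ a, (d x a * (α * (q x a - v x))
          - d x a * log (d x a / (∑ a', d x a') / π₀ x a))
        + (1 - γ) * ∑ x, ν₀ x * v x := by
  have hv := sum_bellmanFlow_mul (P := P) (γ := γ) (ν₀ := ν₀) p v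
  simp_rw [← hflow, sum_mul] at hv
  set T := fun x a => ∑ x', P x a x' * v x'
  have hp : ∀ x a, p x a * (η * bellmanError P r γ v q x a) - p x a * log (p x a / p₀ x a)
      = η * (p x a * r x a) + η * γ * (p x a * T x a) - η * (p x a * q x a)
        - p x a * log (p x a / p₀ x a) := fun x a => by
    rw [bellmanError]
    ring
  have hd : ∀ x a, d x a * (α * (q x a - v x)) - d x a * log (d x a / (∑ a', d x a') / π₀ x a)
      = α * (d x a * q x a) - α * (d x a * v x)
        - d x a * log (d x a / (∑ a', d x a') / π₀ x a) := fun x a => by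
    ring
  simp only [objective, hp, hd, sum_add_distrib, sum_sub_distrib, ← mul_sum] at hv ⊢
  field_simp
  linear_combination (η * α) * (hv + hq)

theorem objective_le_logisticBellmanError [Nonempty A] (hα : 0 < α) (hη : 0 < η)
    (hp₀ : ∀ x a, 0 < p₀ x a) (hπ₀ : ∀ x a, 0 < π₀ x a) {p d : X → A → ℝ}
    (hp : ∀ x a, 0 ≤ p x a) (hp1 : ∑ x, ∑ a, p x a = 1) (hd : ∀ x a, 0 ≤ d x a)
    (hflow : ∀ x, ∑ a, d x a = bellmanFlow P γ ν₀ p x) (q : X → A → ℝ)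
    (hq : ∑ x, ∑ a, p x a * q x a = ∑ x, ∑ a, d x a * q x a) :
    objective r α η p₀ π₀ p d ≤ logisticBellmanError P r γ α η ν₀ p₀ π₀ q := by
  have hgibbs := sum_mul_sub_mul_log_div_le_log_sum_mul_exp (ι := X × A)
    (p := fun z => p z.1 z.2) (μ := fun z => p₀ z.1 z.2)
    (fun z => η * bellmanError P r γ (softValue α π₀ q) q z.1 z.2) (fun z => hp z.1 z.2)
    (by rwa [Fintype.sum_prod_type]) (fun z => hp₀ z.1 z.2)
  simp only [Fintype.sum_prod_type] at hgibbs
  have hcond : ∀ x, ∑ a, (d x a * (α * (q x a - softValue α π₀ q x))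
      - d x a * log (d x a / (∑ a', d x a') / π₀ x a)) ≤ 0 := fun x => by
    have hZ : ∑ a, π₀ x a * exp (α * (q x a - softValue α π₀ q x)) = 1 :=
      sum_softPolicy hα.ne' hπ₀ q x
    simpa [hZ] using
      sum_mul_sub_mul_log_div_sum_le (fun a => α * (q x a - softValue α π₀ q x)) (hd x) (hπ₀ x)
  rw [objective_eq hα.ne' hη.ne' q (softValue α π₀ q) hflow hq, logisticBellmanError]
  have := mul_le_mul_of_nonneg_left hgibbs (one_div_pos.2 hη).le
  have := mul_nonpos_of_nonneg_of_nonpos (one_div_pos.2 hα).le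
    (sum_nonpos (s := univ) fun x _ => hcond x)
  linarith

theorem objective_eq_logisticBellmanError [Nonempty X] [Nonempty A] (hα : α ≠ 0) (hη : η ≠ 0)
    (hp₀ : ∀ x a, 0 < p₀ x a) (hπ₀ : ∀ x a, 0 < π₀ x a) (q : X → A → ℝ) {ps ds : X → A → ℝ}
    (hps : ∀ x a, ps x a = p₀ x a * exp (η * bellmanError P r γ (softValue α π₀ q) q x a)
      / ∑ x', ∑ a', p₀ x' a' * exp (η * bellmanError P r γ (softValue α π₀ q) q x' a'))
    (hds : ∀ x a, ds x a = bellmanFlow P γ ν₀ ps x * softPolicy α π₀ q x a)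
    (hq : ∑ x, ∑ a, ps x a * q x a = ∑ x, ∑ a, ds x a * q x a) :
    objective r α η p₀ π₀ ps ds = logisticBellmanError P r γ α η ν₀ p₀ π₀ q := by
  have hflow := sum_eq_bellmanFlow_of_eq_mul_softPolicy hα hπ₀ hds
  have hgibbs := sum_mul_sub_mul_log_div_eq_log_sum_mul_exp (ι := X × A)
    (p := fun z => ps z.1 z.2) (μ := fun z => p₀ z.1 z.2)
    (fun z => η * bellmanError P r γ (softValue α π₀ q) q z.1 z.2) (fun z => hp₀ z.1 z.2)
    (fun z => by rw [hps, Fintype.sum_prod_type])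
  simp only [Fintype.sum_prod_type] at hgibbs
  have hcond : ∀ x, ∑ a, (ds x a * (α * (q x a - softValue α π₀ q x))
      - ds x a * log (ds x a / (∑ a', ds x a') / π₀ x a)) = 0 := fun x =>
    sum_mul_sub_mul_log_div_sum_eq_zero (bellmanFlow P γ ν₀ ps x)
      (sum_softPolicy hα hπ₀ q x) (hds x) (hπ₀ x)
  rw [objective_eq hα hη q (softValue α π₀ q) hflow hq, logisticBellmanError, hgibbs]
  simp [hcond]

theorem hasDerivAt_logisticBellmanError [Nonempty X] [Nonempty A] (hα : α ≠ 0) (hη : η ≠ 0)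
    (hp₀ : ∀ x a, 0 < p₀ x a) (hπ₀ : ∀ x a, 0 < π₀ x a) (q ψ : X → A → ℝ)
    {ps ds : X → A → ℝ}
    (hps : ∀ x a, ps x a = p₀ x a * exp (η * bellmanError P r γ (softValue α π₀ q) q x a)
      / ∑ x', ∑ a', p₀ x' a' * exp (η * bellmanError P r γ (softValue α π₀ q) q x' a'))
    (hds : ∀ x a, ds x a = bellmanFlow P γ ν₀ ps x * softPolicy α π₀ q x a) :
    HasDerivAt (fun t : ℝ => logisticBellmanError P r γ α η ν₀ p₀ π₀ (q + t • ψ))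
      (∑ x, ∑ a, ds x a * ψ x a - ∑ x, ∑ a, ps x a * ψ x a) 0 := by
  set v' : X → ℝ := fun x => ∑ a, softPolicy α π₀ q x a * ψ x a
  set Z := ∑ x, ∑ a, p₀ x a * exp (η * bellmanError P r γ (softValue α π₀ q) q x a)
  have hv : ∀ x, HasDerivAt (fun t : ℝ => softValue α π₀ (q + t • ψ) x) (v' x) 0 :=
    hasDerivAt_softValue hα hπ₀ q ψ
  have hB : ∀ x a, HasDerivAt
      (fun t : ℝ => η * bellmanError P r γ (softValue α π₀ (q + t • ψ)) (q + t • ψ) x a)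
      (η * (γ * ∑ x', P x a x' * v' x' - ψ x a)) 0 := fun x a =>
    ((((HasDerivAt.fun_sum fun x' _ => (hv x').const_mul (P x a x')).const_mul γ).const_add
      (r x a)).sub ((hasDerivAt_mul_const (ψ x a)).const_add (q x a))).const_mul η
  have hZ : 0 < Z :=
    sum_pos (fun x _ => sum_pos (fun a _ => mul_pos (hp₀ x a) (exp_pos _)) univ_nonempty)
      univ_nonempty
  have hlog := ((HasDerivAt.fun_sum fun x _ => HasDerivAt.fun_sum fun a _ =>
    (hB x a).exp.const_mul (p₀ x a)).log (by simpa only [zero_smul, add_zero] using hZ.ne'))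
  have hlin := HasDerivAt.fun_sum (u := univ) fun x _ => (hv x).const_mul (ν₀ x)
  refine ((hlog.const_mul (1 / η)).add (hlin.const_mul (1 - γ))).congr_deriv ?_
  have hds_sum : ∑ x, ∑ a, ds x a * ψ x a = ∑ x, bellmanFlow P γ ν₀ ps x * v' x := by
    simp_rw [hds, mul_assoc, ← mul_sum]
    rfl
  have hgrad : 1 / η * ((∑ x, ∑ a, p₀ x a * (exp (η * bellmanError P r γ (softValue α π₀ q) q x a)
      * (η * (γ * ∑ x', P x a x' * v' x' - ψ x a)))) / Z)
      = γ * ∑ x, ∑ a, ps x a * ∑ x', P x a x' * v' x' - ∑ x, ∑ a, ps x a * ψ x a := by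
    rw [sum_div, mul_sum, mul_sum, ← sum_sub_distrib]
    refine sum_congr rfl fun x _ => ?_
    rw [sum_div, mul_sum, mul_sum, ← sum_sub_distrib]
    refine sum_congr rfl fun a _ => ?_
    rw [hps]
    field_simp
  simp only [zero_smul, add_zero]
  rw [hds_sum, sum_bellmanFlow_mul, hgrad]
  ring

theorem sum_mul_eq_of_isLocalMin [Nonempty X] [Nonempty A] (hα : α ≠ 0) (hη : η ≠ 0)
    (hp₀ : ∀ x a, 0 < p₀ x a) (hπ₀ : ∀ x a, 0 < π₀ x a) {q ψ ps ds : X → A → ℝ}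
    (hps : ∀ x a, ps x a = p₀ x a * exp (η * bellmanError P r γ (softValue α π₀ q) q x a)
      / ∑ x', ∑ a', p₀ x' a' * exp (η * bellmanError P r γ (softValue α π₀ q) q x' a'))
    (hds : ∀ x a, ds x a = bellmanFlow P γ ν₀ ps x * softPolicy α π₀ q x a)
    (hmin : IsLocalMin (fun t : ℝ => logisticBellmanError P r γ α η ν₀ p₀ π₀ (q + t • ψ)) 0) :
    ∑ x, ∑ a, ds x a * ψ x a = ∑ x, ∑ a, ps x a * ψ x a :=
  sub_eq_zero.1 <| hmin.hasDerivAt_eq_zero <|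
    hasDerivAt_logisticBellmanError hα hη hp₀ hπ₀ q ψ hps hds

end QREPS

end

open QREPS

theorem stmt0_general {X A : Type*} [Fintype X] [Fintype A] [Nonempty X] [Nonempty A]
    {m : ℕ} (P : X → A → X → ℝ) (r : X → A → ℝ) (γ : ℝ) (ν₀ : X → ℝ)
    (φ : X → A → Fin m → ℝ) (α η : ℝ)
    (p₀ d₀ : X → A → ℝ) (π₀ : X → A → ℝ)
    (hP0 : ∀ x a x', 0 ≤ P x a x') (hP1 : ∀ x a, ∑ x', P x a x' = 1)
    (hγ0 : 0 < γ) (hγ1 : γ < 1)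
    (hν₀0 : ∀ x, 0 ≤ ν₀ x) (hν₀1 : ∑ x, ν₀ x = 1)
    (hα : 0 < α) (hη : 0 < η)
    (hp₀pos : ∀ x a, 0 < p₀ x a) (hp₀1 : ∑ x, ∑ a, p₀ x a = 1)
    (hd₀pos : ∀ x a, 0 < d₀ x a)
    (hπ₀ : ∀ x a, π₀ x a = d₀ x a / ∑ a', d₀ x a')
    -- the Q-function, value function, Bellman error and logistic Bellman error
    (Q : (Fin m → ℝ) → X → A → ℝ)
    (hQ : ∀ θ x a, Q θ x a = ∑ i, θ i * φ x a i)
    (V : (Fin m → ℝ) → X → ℝ)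
    (hV : ∀ θ x, V θ x = (1 / α) * Real.log (∑ a, π₀ x a * Real.exp (α * Q θ x a)))
    (Δ : (Fin m → ℝ) → X → A → ℝ)
    (hΔ : ∀ θ x a, Δ θ x a = r x a + γ * (∑ x', P x a x' * V θ x') - Q θ x a)
    (G : (Fin m → ℝ) → ℝ)
    (hG : ∀ θ, G θ = (1 / η) * Real.log (∑ x, ∑ a, p₀ x a * Real.exp (η * Δ θ x a))
        + (1 - γ) * ∑ x, ν₀ x * V θ x)
    -- the objective and the feasible set
    (D : (X → A → ℝ) → (X → A → ℝ) → ℝ)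
    (hD : ∀ p p', D p p' =
      ∑ x, ∑ a, (p x a * Real.log (p x a / p' x a) - p x a + p' x a))
    (Hc : (X → A → ℝ) → (X → A → ℝ) → ℝ)
    (hHc : ∀ d d', Hc d d' = ∑ x, ∑ a,
      d x a * Real.log ((d x a / ∑ a', d x a') / (d' x a / ∑ a', d' x a')))
    (J : (X → A → ℝ) → (X → A → ℝ) → ℝ)
    (hJ : ∀ p d, J p d =
      (∑ x, ∑ a, p x a * r x a) - (1 / η) * D p p₀ - (1 / α) * Hc d d₀)
    (Feas : (X → A → ℝ) → (X → A → ℝ) → Prop)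
    (hFeas : ∀ p d, Feas p d ↔
      ((∀ x a, 0 ≤ p x a) ∧ (∑ x, ∑ a, p x a) = 1 ∧
       (∀ x a, 0 ≤ d x a) ∧ (∑ x, ∑ a, d x a) = 1 ∧
       (∀ x, ∑ a, d x a =
          γ * (∑ x', ∑ a', P x' a' x * p x' a') + (1 - γ) * ν₀ x) ∧
       (∀ i, (∑ x, ∑ a, d x a * φ x a i) = ∑ x, ∑ a, p x a * φ x a i)))
    -- the proposed optimal solution
    (θs : Fin m → ℝ) (hθs : ∀ θ, G θs ≤ G θ)
    (ps ds : X → A → ℝ) (ω : X → ℝ)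
    (hps : ∀ x a, ps x a = p₀ x a * Real.exp (η * Δ θs x a)
        / ∑ x', ∑ a', p₀ x' a' * Real.exp (η * Δ θs x' a'))
    (hω : ∀ x, ω x = γ * (∑ x', ∑ a', P x' a' x * ps x' a') + (1 - γ) * ν₀ x)
    (hds : ∀ x a, ds x a = ω x * (π₀ x a * Real.exp (α * (Q θs x a - V θs x)))) :
    Feas ps ds ∧ ∀ p d, Feas p d → J p d ≤ J ps ds := by
  have hπ₀pos : ∀ x a, 0 < π₀ x a := fun x a => by
    rw [hπ₀]
    exact div_pos (hd₀pos x a) (sum_pos (fun a _ => hd₀pos x a) univ_nonempty)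
  have hVθ : ∀ θ, V θ = softValue α π₀ (Q θ) := fun θ => funext (hV θ)
  have hΔθ : ∀ θ, Δ θ = bellmanError P r γ (softValue α π₀ (Q θ)) (Q θ) := fun θ => by
    ext x a
    rw [hΔ, hVθ]
    rfl
  have hGθ : ∀ θ, G θ = logisticBellmanError P r γ α η ν₀ p₀ π₀ (Q θ) := fun θ => by
    rw [hG, hΔθ, hVθ]
    rfl
  simp only [hΔθ] at hps
  have hds' : ∀ x a, ds x a = bellmanFlow P γ ν₀ ps x * softPolicy α π₀ (Q θs) x a :=
    fun x a => by rw [hds, hω, hVθ]; rfl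
  have hφ : ∀ i, ∑ x, ∑ a, ds x a * φ x a i = ∑ x, ∑ a, ps x a * φ x a i := fun i => by
    have hline : ∀ t : ℝ, Q (θs + t • Pi.single i 1) = Q θs + t • fun x a => φ x a i :=
      fun t => by
        ext x a
        simp [hQ, add_mul, sum_add_distrib, Pi.single_apply]
    have hmin : IsLocalMin (fun t : ℝ =>
        logisticBellmanError P r γ α η ν₀ p₀ π₀ (Q θs + t • fun x a => φ x a i)) 0 :=
      Filter.Eventually.of_forall fun t => by
        simpa only [← hline, ← hGθ, zero_smul, add_zero] using hθs (θs + t • Pi.single i 1)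
    exact sum_mul_eq_of_isLocalMin hα.ne' hη.ne' hp₀pos hπ₀pos hps hds' hmin
  have hZ : 0 < ∑ x, ∑ a,
      p₀ x a * exp (η * bellmanError P r γ (softValue α π₀ (Q θs)) (Q θs) x a) :=
    sum_pos (fun x _ => sum_pos (fun a _ => mul_pos (hp₀pos x a) (exp_pos _)) univ_nonempty)
      univ_nonempty
  have hps0 : ∀ x a, 0 ≤ ps x a := fun x a => by
    rw [hps]
    exact div_nonneg (mul_pos (hp₀pos x a) (exp_pos _)).le hZ.le
  have hps1 : ∑ x, ∑ a, ps x a = 1 := by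
    simp_rw [hps, ← sum_div]
    exact div_self hZ.ne'
  have hds_sum := sum_eq_bellmanFlow_of_eq_mul_softPolicy hα.ne' hπ₀pos hds'
  have hfeas : Feas ps ds := (hFeas ps ds).2
    ⟨hps0, hps1, fun x a => by
      rw [hds']
      exact mul_nonneg (bellmanFlow_nonneg hγ0.le hγ1.le hP0 hν₀0 hps0 x)
        (mul_pos (hπ₀pos x a) (exp_pos _)).le,
    by simp_rw [hds_sum]; exact sum_bellmanFlow hP1 hν₀1 hps1, hds_sum, hφ⟩
  have hobj : ∀ p d, ∑ x, ∑ a, p x a = 1 → J p d = objective r α η p₀ π₀ p d := by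
    intro p d hp1
    rw [hJ, hD, hHc, objective]
    simp only [← hπ₀, sum_add_distrib, sum_sub_distrib, hp1, hp₀1]
    ring
  have hQφ : ∀ {p d : X → A → ℝ}, (∀ i, ∑ x, ∑ a, d x a * φ x a i = ∑ x, ∑ a, p x a * φ x a i)
      → ∑ x, ∑ a, p x a * Q θs x a = ∑ x, ∑ a, d x a * Q θs x a := fun h => by
    simpa only [hQ] using sum_sum_mul_sum_eq_of_sum_sum_mul_eq h θs
  refine ⟨hfeas, fun p d hpd => ?_⟩
  obtain ⟨hp, hp1, hd, -, hflow, hpφ⟩ := (hFeas p d).1 hpd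
  rw [hobj p d hp1, hobj ps ds hps1,
    objective_eq_logisticBellmanError hα.ne' hη.ne' hp₀pos hπ₀pos _ hps hds' (hQφ hφ)]
  exact objective_le_logisticBellmanError hα hη hp₀pos hπ₀pos hp hp1 hd hflow _ (hQφ hpφ)

/-- Characterization of an optimal solution of the Q-REPS primal
optimization problem. With θ* a minimizer of the logistic Bellman error G, the pair
(p*, d*) with p*(x,a) ∝ p₀(x,a)·e^{η·Δ_{θ*}(x,a)} and
d*(x,a) = ω(x)·π₀(a|x)·e^{α·(Q_{θ*}(x,a) − V_{θ*}(x))}, where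
ω(x) = γ·Σ_{x',a'} P(x|x',a')·p*(x',a') + (1−γ)·ν₀(x), is feasible and maximizes
⟨p,r⟩ − (1/η)·D(p‖p₀) − (1/α)·H(d‖d₀) over all feasible pairs of probability
distributions. -/
theorem stmt0 {X A : Type*} [Fintype X] [Fintype A] [Nonempty X] [Nonempty A]
    {m : ℕ} (P : X → A → X → ℝ) (r : X → A → ℝ) (γ : ℝ) (ν₀ : X → ℝ)
    (φ : X → A → Fin m → ℝ) (α η : ℝ)
    (p₀ d₀ : X → A → ℝ) (π₀ : X → A → ℝ)
    (hP0 : ∀ x a x', 0 ≤ P x a x') (hP1 : ∀ x a, ∑ x', P x a x' = 1)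
    (hr : ∀ x a, 0 ≤ r x a ∧ r x a ≤ 1)
    (hγ0 : 0 < γ) (hγ1 : γ < 1)
    (hν₀0 : ∀ x, 0 ≤ ν₀ x) (hν₀1 : ∑ x, ν₀ x = 1)
    (hα : 0 < α) (hη : 0 < η)
    (hp₀pos : ∀ x a, 0 < p₀ x a) (hp₀1 : ∑ x, ∑ a, p₀ x a = 1)
    (hd₀pos : ∀ x a, 0 < d₀ x a) (hd₀1 : ∑ x, ∑ a, d₀ x a = 1)
    (hπ₀ : ∀ x a, π₀ x a = d₀ x a / ∑ a', d₀ x a')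
    -- the Q-function, value function, Bellman error and logistic Bellman error
    (Q : (Fin m → ℝ) → X → A → ℝ)
    (hQ : ∀ θ x a, Q θ x a = ∑ i, θ i * φ x a i)
    (V : (Fin m → ℝ) → X → ℝ)
    (hV : ∀ θ x, V θ x = (1 / α) * Real.log (∑ a, π₀ x a * Real.exp (α * Q θ x a)))
    (Δ : (Fin m → ℝ) → X → A → ℝ)
    (hΔ : ∀ θ x a, Δ θ x a = r x a + γ * (∑ x', P x a x' * V θ x') - Q θ x a)
    (G : (Fin m → ℝ) → ℝ)
    (hG : ∀ θ, G θ = (1 / η) * Real.log (∑ x, ∑ a, p₀ x a * Real.exp (η * Δ θ x a))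
        + (1 - γ) * ∑ x, ν₀ x * V θ x)
    -- the objective and the feasible set
    (D : (X → A → ℝ) → (X → A → ℝ) → ℝ)
    (hD : ∀ p p', D p p' =
      ∑ x, ∑ a, (p x a * Real.log (p x a / p' x a) - p x a + p' x a))
    (Hc : (X → A → ℝ) → (X → A → ℝ) → ℝ)
    (hHc : ∀ d d', Hc d d' = ∑ x, ∑ a,
      d x a * Real.log ((d x a / ∑ a', d x a') / (d' x a / ∑ a', d' x a')))
    (J : (X → A → ℝ) → (X → A → ℝ) → ℝ)
    (hJ : ∀ p d, J p d =
      (∑ x, ∑ a, p x a * r x a) - (1 / η) * D p p₀ - (1 / α) * Hc d d₀)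
    (Feas : (X → A → ℝ) → (X → A → ℝ) → Prop)
    (hFeas : ∀ p d, Feas p d ↔
      ((∀ x a, 0 ≤ p x a) ∧ (∑ x, ∑ a, p x a) = 1 ∧
       (∀ x a, 0 ≤ d x a) ∧ (∑ x, ∑ a, d x a) = 1 ∧
       (∀ x, ∑ a, d x a =
          γ * (∑ x', ∑ a', P x' a' x * p x' a') + (1 - γ) * ν₀ x) ∧
       (∀ i, (∑ x, ∑ a, d x a * φ x a i) = ∑ x, ∑ a, p x a * φ x a i)))
    -- the proposed optimal solution
    (θs : Fin m → ℝ) (hθs : ∀ θ, G θs ≤ G θ)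
    (ps ds : X → A → ℝ) (ω : X → ℝ)
    (hps : ∀ x a, ps x a = p₀ x a * Real.exp (η * Δ θs x a)
        / ∑ x', ∑ a', p₀ x' a' * Real.exp (η * Δ θs x' a'))
    (hω : ∀ x, ω x = γ * (∑ x', ∑ a', P x' a' x * ps x' a') + (1 - γ) * ν₀ x)
    (hds : ∀ x a, ds x a = ω x * (π₀ x a * Real.exp (α * (Q θs x a - V θs x)))) :
    Feas ps ds ∧ ∀ p d, Feas p d → J p d ≤ J ps ds :=
  stmt0_general P r γ ν₀ φ α η p₀ d₀ π₀ hP0 hP1 hγ0 hγ1 hν₀0 hν₀1 hα hη hp₀pos hp₀1 hd₀pos hπ₀ Q hQ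
    V hV Δ hΔ G hG D hD Hc hHc J hJ Feas hFeas θs hθs ps ds ω hps hω hds
end

section
/- Fix transitions ξ_n = (X_n, A_n, X'_n) for n = 1,…,N and a probability vector z ∈ Δ_N, and define S(θ,z) = Σ_{n=1}^N z(n)·(Δ̂_θ(ξ_n) − (1/η)·log(N·z(n))) + (1−γ)·Σ_x ν₀(x)·V_θ(x). Then S(·,z) is differentiable in θ and its gradient is ∇_θ S(θ,z) = Σ_{n=1}^N z(n)·(γ·Σ_a π_θ(a|X'_n)·φ(X'_n,a) − φ(X_n,A_n)) + (1−γ)·Σ_{x,a} ν₀(x)·π_θ(a|x)·φ(x,a), where π_θ(a|x) = π₀(a|x)·e^{α·(Q_θ(x,a) − V_θ(x))}. In particular, if an index I is drawn from z, actions A' ∼ π_θ(·|X'_I) and Ā ∼ π_θ(·|X̄) with X̄ ∼ ν₀, then γ·φ(X'_I,A') − φ(X_I,A_I) + (1−γ)·φ(X̄,Ā) is an unbiased estimate of ∇_θ S(θ,z). -/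
/-
The soft value `V_θ(x) = α⁻¹ log Σ_a π₀(a|x) e^{α ⟨θ, φ(x,a)⟩}` is a scaled log-partition
function, so its gradient is the mean feature `Σ_a π_θ(a|x) φ(x,a)` under the Gibbs policy
`π_θ(·|x) ∝ π₀(·|x) e^{α Q_θ(x,·)}`. Since `S(·,z)` is affine in `Q_θ` and in the values
`V_θ(x)`, its gradient follows by linearity. For unbiasedness, the pairs `(I, A')` and
`(X̄, Ā)` are drawn independently from probability weights, so the expectation of the sum
`γ φ(X'_I, A') − φ(X_I, A_I) + (1 − γ) φ(X̄, Ā)` is the sum of the two expectations.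
-/

open Real InnerProductSpace

section GradientCalculus

variable {F : Type*} [NormedAddCommGroup F] [InnerProductSpace ℝ F] [CompleteSpace F]
  {f g : F → ℝ} {f' g' x : F}

theorem hasGradientAt_inner_const (v x : F) : HasGradientAt (fun u => ⟪u, v⟫_ℝ) v x := by
  rw [hasGradientAt_iff_hasFDerivAt]
  refine ((innerSL ℝ v).hasFDerivAt (x := x)).congr_of_eventuallyEq ?_ |>.congr_fderiv ?_
  · exact Filter.Eventually.of_forall fun u => real_inner_comm _ _
  · rfl

theorem HasGradientAt.add (hf : HasGradientAt f f' x) (hg : HasGradientAt g g' x) :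
    HasGradientAt (fun u => f u + g u) (f' + g') x := by
  rw [hasGradientAt_iff_hasFDerivAt] at *
  simpa using hf.fun_add hg

theorem HasGradientAt.sub (hf : HasGradientAt f f' x) (hg : HasGradientAt g g' x) :
    HasGradientAt (fun u => f u - g u) (f' - g') x := by
  rw [hasGradientAt_iff_hasFDerivAt] at *
  simpa using hf.fun_sub hg

theorem HasGradientAt.const_add (hf : HasGradientAt f f' x) (c : ℝ) :
    HasGradientAt (fun u => c + f u) f' x := by
  rw [hasGradientAt_iff_hasFDerivAt] at *
  exact hf.const_add c

theorem HasGradientAt.sub_const (hf : HasGradientAt f f' x) (c : ℝ) :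
    HasGradientAt (fun u => f u - c) f' x := by
  rw [hasGradientAt_iff_hasFDerivAt] at *
  exact hf.sub_const c

theorem HasGradientAt.const_mul (hf : HasGradientAt f f' x) (c : ℝ) :
    HasGradientAt (fun u => c * f u) (c • f') x := by
  rw [hasGradientAt_iff_hasFDerivAt] at *
  simpa using hf.const_mul c

theorem HasGradientAt.sum {ι : Type*} (s : Finset ι) {f : ι → F → ℝ} {f' : ι → F}
    (hf : ∀ i ∈ s, HasGradientAt (f i) (f' i) x) :
    HasGradientAt (fun u => ∑ i ∈ s, f i u) (∑ i ∈ s, f' i) x := by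
  simp only [hasGradientAt_iff_hasFDerivAt, map_sum] at *
  exact HasFDerivAt.fun_sum hf

theorem HasGradientAt.exp (hf : HasGradientAt f f' x) :
    HasGradientAt (fun u => Real.exp (f u)) (Real.exp (f x) • f') x := by
  rw [hasGradientAt_iff_hasFDerivAt, map_smul] at *
  exact hf.exp

theorem HasGradientAt.log (hf : HasGradientAt f f' x) (hx : f x ≠ 0) :
    HasGradientAt (fun u => Real.log (f u)) ((f x)⁻¹ • f') x := by
  rw [hasGradientAt_iff_hasFDerivAt, map_smul] at *
  exact hf.log hx

end GradientCalculus

section Gibbs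

variable {ι : Type*} [Fintype ι]

noncomputable def gibbs (w s : ι → ℝ) (i : ι) : ℝ :=
  w i * exp (s i) / ∑ j, w j * exp (s j)

theorem sum_mul_exp_pos [Nonempty ι] {w : ι → ℝ} (hw : ∀ i, 0 < w i) (s : ι → ℝ) :
    0 < ∑ i, w i * exp (s i) :=
  Finset.sum_pos (fun i _ => mul_pos (hw i) (exp_pos _)) Finset.univ_nonempty

theorem sum_gibbs [Nonempty ι] {w : ι → ℝ} (hw : ∀ i, 0 < w i) (s : ι → ℝ) :
    ∑ i, gibbs w s i = 1 := by
  simp only [gibbs, ← Finset.sum_div]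
  exact div_self (sum_mul_exp_pos hw _).ne'

theorem gibbs_eq_mul_exp_sub_log [Nonempty ι] {w : ι → ℝ} (hw : ∀ i, 0 < w i) (s : ι → ℝ)
    (i : ι) : gibbs w s i = w i * exp (s i - log (∑ j, w j * exp (s j))) := by
  rw [exp_sub, exp_log (sum_mul_exp_pos hw _), gibbs, mul_div_assoc]

variable {F : Type*} [NormedAddCommGroup F] [InnerProductSpace ℝ F] [CompleteSpace F]

theorem hasGradientAt_inv_mul_log_sum_mul_exp [Nonempty ι] {w : ι → ℝ} (hw : ∀ i, 0 < w i)
    (v : ι → F) {α : ℝ} (hα : α ≠ 0) (θ : F) :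
    HasGradientAt (fun ϑ => α⁻¹ * log (∑ i, w i * exp (α * ⟪ϑ, v i⟫_ℝ)))
      (∑ i, gibbs w (fun j => α * ⟪θ, v j⟫_ℝ) i • v i) θ := by
  have hZ : HasGradientAt (fun ϑ => ∑ i, w i * exp (α * ⟪ϑ, v i⟫_ℝ))
      (∑ i, w i • exp (α * ⟪θ, v i⟫_ℝ) • α • v i) θ :=
    HasGradientAt.sum _ fun i _ =>
      ((hasGradientAt_inner_const (v i) θ).const_mul α).exp.const_mul (w i)
  convert (hZ.log (sum_mul_exp_pos hw _).ne').const_mul α⁻¹ using 1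
  simp only [Finset.smul_sum, smul_smul, gibbs]
  refine Finset.sum_congr rfl fun i _ => congrArg (· • v i) ?_
  field_simp

end Gibbs

theorem Finset.sum_sum_mul_smul_add {R M ι κ : Type*} [CommSemiring R] [AddCommMonoid M]
    [Module R M] (s : Finset ι) (t : Finset κ) (p : ι → R) (q : κ → R) (u : ι → M)
    (w : κ → M) :
    ∑ i ∈ s, ∑ j ∈ t, (p i * q j) • (u i + w j)
      = (∑ j ∈ t, q j) • ∑ i ∈ s, p i • u i + (∑ i ∈ s, p i) • ∑ j ∈ t, q j • w j := by
  simp only [smul_add, Finset.sum_add_distrib]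
  rw [Finset.sum_comm (s := s) (f := fun i j => (p i * q j) • w j)]
  simp only [← Finset.sum_smul, ← Finset.mul_sum, ← Finset.sum_mul, Finset.smul_sum, smul_smul,
    mul_comm]

theorem sum_sampled_gradient_eq {ι X A E : Type*} [Fintype ι] [Fintype X] [Fintype A]
    [AddCommGroup E] [Module ℝ E] {z : ι → ℝ} {ν : X → ℝ} {p : X → A → ℝ}
    (hz : ∑ n, z n = 1) (hν : ∑ x, ν x = 1) (hp : ∀ x, ∑ a, p x a = 1)
    (ξ : ι → X × A × X) (φ : X → A → E) (γ c : ℝ) :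
    ∑ n, ∑ a', ∑ x, ∑ a, (z n * p (ξ n).2.2 a' * (ν x * p x a)) •
        (γ • φ (ξ n).2.2 a' - φ (ξ n).1 (ξ n).2.1 + c • φ x a)
      = ∑ n, z n • (γ • ∑ a, p (ξ n).2.2 a • φ (ξ n).2.2 a - φ (ξ n).1 (ξ n).2.1)
        + c • ∑ x, ∑ a, (ν x * p x a) • φ x a := by
  let P : ι × A → ℝ := fun i => z i.1 * p (ξ i.1).2.2 i.2
  let R : X × A → ℝ := fun j => ν j.1 * p j.1 j.2
  have hP : ∑ i, P i = 1 := by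
    simp only [P, Fintype.sum_prod_type, ← Finset.mul_sum, hp, mul_one, hz]
  have hR : ∑ j, R j = 1 := by
    simp only [R, Fintype.sum_prod_type, ← Finset.mul_sum, hp, mul_one, hν]
  calc _ = ∑ i, ∑ j, (P i * R j) •
        ((γ • φ (ξ i.1).2.2 i.2 - φ (ξ i.1).1 (ξ i.1).2.1) + c • φ j.1 j.2) := by
        simp only [P, R, Fintype.sum_prod_type]
    _ = ∑ i, P i • (γ • φ (ξ i.1).2.2 i.2 - φ (ξ i.1).1 (ξ i.1).2.1)
        + ∑ j, R j • c • φ j.1 j.2 := by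
        rw [Finset.sum_sum_mul_smul_add, hP, hR, one_smul, one_smul]
    _ = _ := by
        congr 1
        · simp only [P, Fintype.sum_prod_type, mul_smul, ← Finset.smul_sum, smul_sub,
            Finset.sum_sub_distrib, ← Finset.sum_smul, hp, one_smul]
          simp only [Finset.smul_sum, smul_comm γ]
        · simp only [R, Fintype.sum_prod_type, Finset.smul_sum, smul_comm c]

theorem hasGradientAt_bellman_objective {ι X A F : Type*} [Fintype ι] [Fintype X]
    [NormedAddCommGroup F] [InnerProductSpace ℝ F] [CompleteSpace F]
    {V : F → X → ℝ} {G : X → F} {θ : F} (hV : ∀ x, HasGradientAt (V · x) (G x) θ)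
    (r : X → A → ℝ) (φ : X → A → F) (ξ : ι → X × A × X) (z c : ι → ℝ) (ν : X → ℝ) (γ β : ℝ) :
    HasGradientAt (fun ϑ => (∑ n, z n * (r (ξ n).1 (ξ n).2.1 + γ * V ϑ (ξ n).2.2
        - ⟪ϑ, φ (ξ n).1 (ξ n).2.1⟫_ℝ - c n)) + β * ∑ x, ν x * V ϑ x)
      ((∑ n, z n • (γ • G (ξ n).2.2 - φ (ξ n).1 (ξ n).2.1)) + β • ∑ x, ν x • G x) θ :=
  (HasGradientAt.sum _ fun n _ =>
    ((((hV _).const_mul γ).const_add _).sub (hasGradientAt_inner_const _ θ)).sub_const _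
      |>.const_mul (z n)).add
    ((HasGradientAt.sum _ fun x _ => (hV x).const_mul (ν x)).const_mul β)

theorem stmt3_general {X A : Type*} [Fintype X] [Fintype A] [Nonempty A]
    {m : ℕ} (r : X → A → ℝ) (γ : ℝ) (ν₀ : X → ℝ)
    (φ : X → A → EuclideanSpace ℝ (Fin m)) (α η : ℝ) (π₀ : X → A → ℝ)
    (hν₀1 : ∑ x, ν₀ x = 1)
    (hα : 0 < α)
    (hπ₀pos : ∀ x a, 0 < π₀ x a)
    (N : ℕ) (ξ : Fin N → X × A × X)
    (z : Fin N → ℝ) (hz1 : ∑ n, z n = 1)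
    (Q : EuclideanSpace ℝ (Fin m) → X → A → ℝ)
    (hQ : ∀ θ x a, Q θ x a = inner ℝ θ (φ x a))
    (V : EuclideanSpace ℝ (Fin m) → X → ℝ)
    (hV : ∀ θ x, V θ x = (1 / α) * Real.log (∑ a, π₀ x a * Real.exp (α * Q θ x a)))
    (Δhat : EuclideanSpace ℝ (Fin m) → X × A × X → ℝ)
    (hΔhat : ∀ θ x a x', Δhat θ (x, a, x') = r x a + γ * V θ x' - Q θ x a)
    (S : EuclideanSpace ℝ (Fin m) → ℝ)
    (hS : ∀ θ, S θ =
      (∑ n, z n * (Δhat θ (ξ n) - (1 / η) * Real.log (N * z n)))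
        + (1 - γ) * ∑ x, ν₀ x * V θ x)
    (θ : EuclideanSpace ℝ (Fin m))
    (πθ : X → A → ℝ)
    (hπθ : ∀ x a, πθ x a = π₀ x a * Real.exp (α * (Q θ x a - V θ x)))
    (g : EuclideanSpace ℝ (Fin m))
    (hg : g = (∑ n, z n •
        (γ • (∑ a, πθ (ξ n).2.2 a • φ (ξ n).2.2 a) - φ (ξ n).1 (ξ n).2.1))
      + (1 - γ) • ∑ x, ∑ a, (ν₀ x * πθ x a) • φ x a) :
    HasGradientAt S g θ ∧
      (∑ n, ∑ a', ∑ x, ∑ a, (z n * πθ (ξ n).2.2 a' * (ν₀ x * πθ x a)) •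
          (γ • φ (ξ n).2.2 a' - φ (ξ n).1 (ξ n).2.1 + (1 - γ) • φ x a)) = g := by
  have hV' : ∀ ϑ x, V ϑ x = α⁻¹ * log (∑ a, π₀ x a * exp (α * ⟪ϑ, φ x a⟫_ℝ)) := by
    intro ϑ x
    simp only [hV, hQ, one_div]
  have hπθ_gibbs : ∀ x a, πθ x a = gibbs (π₀ x) (fun b => α * ⟪θ, φ x b⟫_ℝ) a := by
    intro x a
    rw [gibbs_eq_mul_exp_sub_log (hπ₀pos x), hπθ, hV', hQ, mul_sub, mul_inv_cancel_left₀ hα.ne']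
  have hπθ_sum : ∀ x, ∑ a, πθ x a = 1 := fun x => by
    simp only [hπθ_gibbs, sum_gibbs (hπ₀pos x)]
  have hV_grad : ∀ x, HasGradientAt (V · x) (∑ a, πθ x a • φ x a) θ := fun x => by
    simp only [hV', hπθ_gibbs]
    exact hasGradientAt_inv_mul_log_sum_mul_exp (hπ₀pos x) (φ x) hα.ne' θ
  refine ⟨?_, hg ▸ sum_sampled_gradient_eq hz1 hν₀1 hπθ_sum ξ φ γ (1 - γ)⟩
  convert hasGradientAt_bellman_objective hV_grad r φ ξ z (fun n => 1 / η * log (N * z n)) ν₀ γ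
    (1 - γ) using 1
  · funext ϑ
    simp only [hS, ← hQ, ← hΔhat]
  · simp only [hg, Finset.smul_sum, smul_smul]

/-- For fixed transitions ξ_n = (X_n, A_n, X'_n) and z ∈ Δ_N, the map
θ ↦ S(θ,z) is differentiable with gradient
∇_θ S(θ,z) = Σ_n z(n)·(γ·Σ_a π_θ(a|X'_n)·φ(X'_n,a) − φ(X_n,A_n))
            + (1−γ)·Σ_{x,a} ν₀(x)·π_θ(a|x)·φ(x,a),
and the single-sample estimator γ·φ(X'_I,A') − φ(X_I,A_I) + (1−γ)·φ(X̄,Ā) with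
I ∼ z, A' ∼ π_θ(·|X'_I), X̄ ∼ ν₀, Ā ∼ π_θ(·|X̄) is unbiased: its expectation
(the corresponding finite weighted sum) equals this gradient. -/
theorem stmt3 {X A : Type*} [Fintype X] [Fintype A] [Nonempty X] [Nonempty A]
    {m : ℕ} (r : X → A → ℝ) (γ : ℝ) (ν₀ : X → ℝ)
    (φ : X → A → EuclideanSpace ℝ (Fin m)) (α η : ℝ) (π₀ : X → A → ℝ)
    (hr : ∀ x a, 0 ≤ r x a ∧ r x a ≤ 1)
    (hγ0 : 0 < γ) (hγ1 : γ < 1)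
    (hν₀0 : ∀ x, 0 ≤ ν₀ x) (hν₀1 : ∑ x, ν₀ x = 1)
    (hα : 0 < α) (hη : 0 < η)
    (hπ₀pos : ∀ x a, 0 < π₀ x a) (hπ₀1 : ∀ x, ∑ a, π₀ x a = 1)
    (N : ℕ) (hN : 1 ≤ N) (ξ : Fin N → X × A × X)
    (z : Fin N → ℝ) (hz0 : ∀ n, 0 ≤ z n) (hz1 : ∑ n, z n = 1)
    (Q : EuclideanSpace ℝ (Fin m) → X → A → ℝ)
    (hQ : ∀ θ x a, Q θ x a = inner ℝ θ (φ x a))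
    (V : EuclideanSpace ℝ (Fin m) → X → ℝ)
    (hV : ∀ θ x, V θ x = (1 / α) * Real.log (∑ a, π₀ x a * Real.exp (α * Q θ x a)))
    (Δhat : EuclideanSpace ℝ (Fin m) → X × A × X → ℝ)
    (hΔhat : ∀ θ x a x', Δhat θ (x, a, x') = r x a + γ * V θ x' - Q θ x a)
    (S : EuclideanSpace ℝ (Fin m) → ℝ)
    (hS : ∀ θ, S θ =
      (∑ n, z n * (Δhat θ (ξ n) - (1 / η) * Real.log (N * z n)))
        + (1 - γ) * ∑ x, ν₀ x * V θ x)
    (θ : EuclideanSpace ℝ (Fin m))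
    (πθ : X → A → ℝ)
    (hπθ : ∀ x a, πθ x a = π₀ x a * Real.exp (α * (Q θ x a - V θ x)))
    (g : EuclideanSpace ℝ (Fin m))
    (hg : g = (∑ n, z n •
        (γ • (∑ a, πθ (ξ n).2.2 a • φ (ξ n).2.2 a) - φ (ξ n).1 (ξ n).2.1))
      + (1 - γ) • ∑ x, ∑ a, (ν₀ x * πθ x a) • φ x a) :
    HasGradientAt S g θ ∧
      (∑ n, ∑ a', ∑ x, ∑ a, (z n * πθ (ξ n).2.2 a' * (ν₀ x * πθ x a)) •
          (γ • φ (ξ n).2.2 a' - φ (ξ n).1 (ξ n).2.1 + (1 - γ) • φ x a)) = g :=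
  stmt3_general r γ ν₀ φ α η π₀ hν₀1 hα hπ₀pos N ξ z hz1 Q hQ V hV Δhat hΔhat S hS θ πθ hπθ g hg
end

section
/- Suppose the MDP is factored linear with respect to the feature map φ. Let ℳ denote the set of pairs (p,d) of probability distributions on 𝒳×𝒜 satisfying Σ_a d(x,a) = γ·Σ_{x',a'} P(x|x',a')·p(x',a') + (1−γ)·ν₀(x) for all x and Σ_{x,a} d(x,a)·φ(x,a) = Σ_{x,a} p(x,a)·φ(x,a), and let ℳ' = {d : ∃p, (p,d) ∈ ℳ}. Then ℳ' = ℳ*, the set of all valid occupancy measures. Furthermore, if (p*, d*) maximizes ⟨p,r⟩ over ℳ, then ⟨d*, r⟩ = max_{p ∈ ℳ*} ⟨p,r⟩. -/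
lemma lin_swap {X A : Type*} [Fintype X] [Fintype A] {m : ℕ}
    (φ : X → A → Fin m → ℝ) (c : Fin m → ℝ) (q : X → A → ℝ) :
    ∑ x, ∑ a, (∑ i, c i * φ x a i) * q x a = ∑ i, c i * ∑ x, ∑ a, q x a * φ x a i := by
  simp_rw [Finset.sum_mul, Finset.mul_sum]
  conv_rhs => rw [Finset.sum_comm]
  refine Finset.sum_congr rfl fun x _ => ?_
  conv_rhs => rw [Finset.sum_comm]
  exact Finset.sum_congr rfl fun a _ => Finset.sum_congr rfl fun i _ => by ring

/-- Primal realizability for factored linear MDPs. Let ℳ be the set of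
pairs (p,d) of probability distributions on 𝒳×𝒜 satisfying the relaxed constraints
and ℳ' its projection to the d-component. Then ℳ' equals the set ℳ* of occupancy
measures, and any (p*,d*) maximizing ⟨p,r⟩ over ℳ has ⟨d*,r⟩ = max_{p∈ℳ*} ⟨p,r⟩. -/
theorem stmt7 {X A : Type*} [Fintype X] [Fintype A] [Nonempty X] [Nonempty A]
    {m : ℕ} (P : X → A → X → ℝ) (r : X → A → ℝ) (γ : ℝ) (ν₀ : X → ℝ)
    (φ : X → A → Fin m → ℝ)
    (hP0 : ∀ x a x', 0 ≤ P x a x') (hP1 : ∀ x a, ∑ x', P x a x' = 1)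
    (hr : ∀ x a, 0 ≤ r x a ∧ r x a ≤ 1)
    (hγ0 : 0 < γ) (hγ1 : γ < 1)
    (hν₀0 : ∀ x, 0 ≤ ν₀ x) (hν₀1 : ∑ x, ν₀ x = 1)
    -- factored linear MDP assumption
    (μ : X → Fin m → ℝ) (ϑ : Fin m → ℝ)
    (hPlin : ∀ x a x', P x a x' = ∑ i, μ x' i * φ x a i)
    (hrlin : ∀ x a, r x a = ∑ i, ϑ i * φ x a i)
    -- the set ℳ of feasible pairs, ℳ' its projection, ℳ* the occupancy measures
    (ℳ : Set ((X → A → ℝ) × (X → A → ℝ)))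
    (hℳ : ∀ p d, (p, d) ∈ ℳ ↔
      ((∀ x a, 0 ≤ p x a) ∧ (∑ x, ∑ a, p x a) = 1 ∧
       (∀ x a, 0 ≤ d x a) ∧ (∑ x, ∑ a, d x a) = 1 ∧
       (∀ x, ∑ a, d x a =
          γ * (∑ x', ∑ a', P x' a' x * p x' a') + (1 - γ) * ν₀ x) ∧
       (∀ i, (∑ x, ∑ a, d x a * φ x a i) = ∑ x, ∑ a, p x a * φ x a i)))
    (ℳ' : Set (X → A → ℝ)) (hℳ' : ∀ d, d ∈ ℳ' ↔ ∃ p, (p, d) ∈ ℳ)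
    (ℳstar : Set (X → A → ℝ))
    (hℳstar : ∀ p, p ∈ ℳstar ↔
      ((∀ x a, 0 ≤ p x a) ∧
       ∀ x, ∑ a, p x a =
          γ * (∑ x', ∑ a', P x' a' x * p x' a') + (1 - γ) * ν₀ x)) :
    ℳ' = ℳstar ∧
      ∀ ps ds : X → A → ℝ, (ps, ds) ∈ ℳ →
        (∀ p d, (p, d) ∈ ℳ → (∑ x, ∑ a, p x a * r x a) ≤ ∑ x, ∑ a, ps x a * r x a) →
        IsGreatest {v : ℝ | ∃ p ∈ ℳstar, v = ∑ x, ∑ a, p x a * r x a}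
          (∑ x, ∑ a, ds x a * r x a) := by
  -- the feature constraint transfers the flow functional from p to d
  have hflow : ∀ p d : X → A → ℝ,
      (∀ i, (∑ x, ∑ a, d x a * φ x a i) = ∑ x, ∑ a, p x a * φ x a i) →
      ∀ x, (∑ x', ∑ a', P x' a' x * p x' a') = ∑ x', ∑ a', P x' a' x * d x' a' := by
    intro p d h x
    simp_rw [hPlin]
    rw [lin_swap φ (μ x) p, lin_swap φ (μ x) d]
    exact Finset.sum_congr rfl fun i _ => by rw [h i]
  -- reward as a linear functional of the features
  have hrval : ∀ q : X → A → ℝ,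
      ∑ x, ∑ a, q x a * r x a = ∑ i, ϑ i * ∑ x, ∑ a, q x a * φ x a i := by
    intro q
    rw [← lin_swap φ ϑ q]
    exact Finset.sum_congr rfl fun x _ => Finset.sum_congr rfl fun a _ => by
      rw [hrlin]; ring
  -- occupancy measures have total mass 1
  have hsum1 : ∀ p ∈ ℳstar, ∑ x, ∑ a, p x a = 1 := by
    intro p hp
    obtain ⟨hp0, hpc⟩ := (hℳstar p).1 hp
    have h2 : ∑ x, ∑ x', ∑ a', P x' a' x * p x' a' = ∑ x', ∑ a', p x' a' := by
      rw [Finset.sum_comm]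
      refine Finset.sum_congr rfl fun x' _ => ?_
      rw [Finset.sum_comm]
      refine Finset.sum_congr rfl fun a' _ => ?_
      rw [← Finset.sum_mul, hP1, one_mul]
    have key : ∑ x, ∑ a, p x a = γ * (∑ x, ∑ a, p x a) + (1 - γ) := by
      calc ∑ x, ∑ a, p x a
          = ∑ x, (γ * (∑ x', ∑ a', P x' a' x * p x' a') + (1 - γ) * ν₀ x) :=
            Finset.sum_congr rfl fun x _ => hpc x
        _ = γ * (∑ x, ∑ a, p x a) + (1 - γ) := by
            rw [Finset.sum_add_distrib, ← Finset.mul_sum, ← Finset.mul_sum, h2, hν₀1, mul_one]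
    have hne : (0:ℝ) < 1 - γ := by linarith
    nlinarith [key]
  -- membership transfer: (p,d) ∈ ℳ → d ∈ ℳstar
  have hmem : ∀ p d : X → A → ℝ, (p, d) ∈ ℳ → d ∈ ℳstar := by
    intro p d hpd
    obtain ⟨hp0, hp1, hd0, hd1, hc, hf⟩ := (hℳ p d).1 hpd
    refine (hℳstar d).2 ⟨hd0, fun x => ?_⟩
    rw [hc x, hflow p d hf x]
  -- converse: d ∈ ℳstar → (d,d) ∈ ℳ
  have hdd : ∀ d ∈ ℳstar, (d, d) ∈ ℳ := by
    intro d hd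
    obtain ⟨hd0, hdc⟩ := (hℳstar d).1 hd
    exact (hℳ d d).2 ⟨hd0, hsum1 d hd, hd0, hsum1 d hd, hdc, fun i => rfl⟩
  constructor
  · ext d
    rw [hℳ' d]
    exact ⟨fun ⟨p, hp⟩ => hmem p d hp, fun hd => ⟨d, hdd d hd⟩⟩
  · intro ps ds hpd hmax
    obtain ⟨hp0, hp1, hd0, hd1, hc, hf⟩ := (hℳ ps ds).1 hpd
    have hval : ∑ x, ∑ a, ds x a * r x a = ∑ x, ∑ a, ps x a * r x a := by
      rw [hrval ds, hrval ps]
      exact Finset.sum_congr rfl fun i _ => by rw [hf i]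
    constructor
    · exact ⟨ds, hmem ps ds hpd, rfl⟩
    · rintro v ⟨p, hp, rfl⟩
      calc ∑ x, ∑ a, p x a * r x a ≤ ∑ x, ∑ a, ps x a * r x a := hmax p p (hdd p hp)
        _ = ∑ x, ∑ a, ds x a * r x a := hval.symm
end

section
/- Regarded as a function of the action-value function Q ∈ ℝ^{𝒳×𝒜} (i.e., with identity features), the logistic Bellman error G(Q) = (1/η)·log(Σ_{x,a} p₀(x,a)·e^{η·Δ_Q(x,a)}) + (1−γ)·Σ_x ν₀(x)·V_Q(x) is 2-Lipschitz with respect to the supremum norm: for all Q, Q' ∈ ℝ^{𝒳×𝒜}, |G(Q) − G(Q')| ≤ 2·max_{x,a} |Q(x,a) − Q'(x,a)|. -/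
lemma lse_le {ι : Type*} [Fintype ι] [Nonempty ι] (w f g : ι → ℝ) (hw : ∀ i, 0 < w i)
    (β c : ℝ) (hβ : 0 < β) (h : ∀ i, f i ≤ g i + c) :
    (1/β) * Real.log (∑ i, w i * Real.exp (β * f i)) ≤
    (1/β) * Real.log (∑ i, w i * Real.exp (β * g i)) + c := by
  have hposf : (0:ℝ) < ∑ i, w i * Real.exp (β * f i) :=
    Finset.sum_pos (fun i _ => mul_pos (hw i) (Real.exp_pos _)) Finset.univ_nonempty
  have hposg : (0:ℝ) < ∑ i, w i * Real.exp (β * g i) :=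
    Finset.sum_pos (fun i _ => mul_pos (hw i) (Real.exp_pos _)) Finset.univ_nonempty
  have hle : ∑ i, w i * Real.exp (β * f i) ≤
      Real.exp (β * c) * ∑ i, w i * Real.exp (β * g i) := by
    rw [Finset.mul_sum]
    refine Finset.sum_le_sum fun i _ => ?_
    rw [mul_left_comm]
    refine mul_le_mul_of_nonneg_left ?_ (hw i).le
    rw [← Real.exp_add]
    exact Real.exp_le_exp.2 (by nlinarith [h i])
  have hlog := Real.log_le_log hposf hle
  rw [Real.log_mul (Real.exp_ne_zero _) (ne_of_gt hposg), Real.log_exp] at hlog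
  have := mul_le_mul_of_nonneg_left hlog (le_of_lt (one_div_pos.2 hβ))
  calc (1/β) * Real.log (∑ i, w i * Real.exp (β * f i))
      ≤ (1/β) * (β * c + Real.log (∑ i, w i * Real.exp (β * g i))) := this
    _ = (1/β) * Real.log (∑ i, w i * Real.exp (β * g i)) + c := by
        field_simp; ring

/-- Regarded as a function of Q ∈ ℝ^{𝒳×𝒜} (identity features), the
logistic Bellman error G is 2-Lipschitz with respect to the supremum norm (the norm
on the finite Pi type `X × A → ℝ` is the sup norm). -/
theorem stmt11 {X A : Type*} [Fintype X] [Fintype A] [Nonempty X] [Nonempty A]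
    (P : X → A → X → ℝ) (r : X → A → ℝ) (γ : ℝ) (ν₀ : X → ℝ) (α η : ℝ)
    (p₀ : X → A → ℝ) (π₀ : X → A → ℝ)
    (hP0 : ∀ x a x', 0 ≤ P x a x') (hP1 : ∀ x a, ∑ x', P x a x' = 1)
    (hr : ∀ x a, 0 ≤ r x a ∧ r x a ≤ 1)
    (hγ0 : 0 < γ) (hγ1 : γ < 1)
    (hν₀0 : ∀ x, 0 ≤ ν₀ x) (hν₀1 : ∑ x, ν₀ x = 1)
    (hα : 0 < α) (hη : 0 < η)
    (hp₀pos : ∀ x a, 0 < p₀ x a) (hp₀1 : ∑ x, ∑ a, p₀ x a = 1)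
    (hπ₀pos : ∀ x a, 0 < π₀ x a) (hπ₀1 : ∀ x, ∑ a, π₀ x a = 1)
    (V : (X × A → ℝ) → X → ℝ)
    (hV : ∀ Q x, V Q x = (1 / α) * Real.log (∑ a, π₀ x a * Real.exp (α * Q (x, a))))
    (Δ : (X × A → ℝ) → X → A → ℝ)
    (hΔ : ∀ Q x a, Δ Q x a = r x a + γ * (∑ x', P x a x' * V Q x') - Q (x, a))
    (G : (X × A → ℝ) → ℝ)
    (hG : ∀ Q, G Q = (1 / η) * Real.log (∑ x, ∑ a, p₀ x a * Real.exp (η * Δ Q x a))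
        + (1 - γ) * ∑ x, ν₀ x * V Q x) :
    ∀ Q Q' : X × A → ℝ,
      |G Q - G Q'| ≤ 2 * (Finset.univ.sup' Finset.univ_nonempty
        fun p : X × A => |Q p - Q' p|) := by
  -- key one-sided bound
  have key : ∀ Q Q' : X × A → ℝ,
      G Q - G Q' ≤ 2 * (Finset.univ.sup' Finset.univ_nonempty
        fun p : X × A => |Q p - Q' p|) := by
    intro Q Q'
    set M := Finset.univ.sup' Finset.univ_nonempty fun p : X × A => |Q p - Q' p| with hM
    have hMle : ∀ p : X × A, |Q p - Q' p| ≤ M := fun p =>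
      Finset.le_sup' (f := fun p : X × A => |Q p - Q' p|) (Finset.mem_univ p)
    have hM0 : 0 ≤ M := le_trans (abs_nonneg _) (hMle (Classical.arbitrary _))
    -- V bounds
    have hVle : ∀ x, V Q x ≤ V Q' x + M := by
      intro x
      rw [hV, hV]
      exact lse_le (π₀ x) (fun a => Q (x, a)) (fun a => Q' (x, a)) (hπ₀pos x) α M hα
        (fun a => by have := abs_le.1 (hMle (x, a)); linarith [this.2])
    have hVge : ∀ x, V Q' x ≤ V Q x + M := by
      intro x
      rw [hV, hV]
      exact lse_le (π₀ x) (fun a => Q' (x, a)) (fun a => Q (x, a)) (hπ₀pos x) α M hα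
        (fun a => by have := abs_le.1 (hMle (x, a)); linarith [this.1])
    -- Δ bound
    have hΔle : ∀ x a, Δ Q x a ≤ Δ Q' x a + (1 + γ) * M := by
      intro x a
      rw [hΔ, hΔ]
      have h1 : ∑ x', P x a x' * V Q x' ≤ (∑ x', P x a x' * V Q' x') + M := by
        have : ∑ x', P x a x' * V Q x' ≤ ∑ x', P x a x' * (V Q' x' + M) :=
          Finset.sum_le_sum fun x' _ =>
            mul_le_mul_of_nonneg_left (hVle x') (hP0 x a x')
        calc ∑ x', P x a x' * V Q x' ≤ ∑ x', P x a x' * (V Q' x' + M) := this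
          _ = (∑ x', P x a x' * V Q' x') + (∑ x', P x a x') * M := by
              rw [Finset.sum_mul]; rw [← Finset.sum_add_distrib]; congr 1; ext x'; ring
          _ = (∑ x', P x a x' * V Q' x') + M := by rw [hP1]; ring
      have h2 := abs_le.1 (hMle (x, a))
      nlinarith [h2.1, h2.2]
    -- first term bound
    have hT1 : (1 / η) * Real.log (∑ x, ∑ a, p₀ x a * Real.exp (η * Δ Q x a)) ≤
        (1 / η) * Real.log (∑ x, ∑ a, p₀ x a * Real.exp (η * Δ Q' x a)) + (1 + γ) * M := by
      have hrw : ∀ Qb : X × A → ℝ, (∑ x, ∑ a, p₀ x a * Real.exp (η * Δ Qb x a)) =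
          ∑ p : X × A, p₀ p.1 p.2 * Real.exp (η * Δ Qb p.1 p.2) := by
        intro Qb; rw [Fintype.sum_prod_type]
      rw [hrw, hrw]
      exact lse_le (fun p : X × A => p₀ p.1 p.2) (fun p => Δ Q p.1 p.2)
        (fun p => Δ Q' p.1 p.2) (fun p => hp₀pos p.1 p.2) η ((1 + γ) * M) hη
        (fun p => hΔle p.1 p.2)
    -- second term bound
    have hT2 : (1 - γ) * (∑ x, ν₀ x * V Q x) ≤
        (1 - γ) * (∑ x, ν₀ x * V Q' x) + (1 - γ) * M := by
      have h : ∑ x, ν₀ x * V Q x ≤ (∑ x, ν₀ x * V Q' x) + M := by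
        calc ∑ x, ν₀ x * V Q x ≤ ∑ x, ν₀ x * (V Q' x + M) :=
              Finset.sum_le_sum fun x _ => mul_le_mul_of_nonneg_left (hVle x) (hν₀0 x)
          _ = (∑ x, ν₀ x * V Q' x) + (∑ x, ν₀ x) * M := by
              rw [Finset.sum_mul, ← Finset.sum_add_distrib]; congr 1; ext x; ring
          _ = (∑ x, ν₀ x * V Q' x) + M := by rw [hν₀1]; ring
      nlinarith
    rw [hG, hG]
    nlinarith [hT1, hT2]
  intro Q Q'
  have h1 := key Q Q'
  have h2 := key Q' Q
  have hsymm : (Finset.univ.sup' Finset.univ_nonempty fun p : X × A => |Q' p - Q p|) =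
      (Finset.univ.sup' Finset.univ_nonempty fun p : X × A => |Q p - Q' p|) := by
    congr 1; ext p; rw [abs_sub_comm]
  rw [hsymm] at h2
  rw [abs_sub_le_iff]
  exact ⟨h1, h2⟩
end

section
/- Let π₁ and π₂ be two policies, and let ν₁ and ν₂ be probability distributions on 𝒳 satisfying the discounted stationarity equations ν_i(x') = γ·Σ_{x,a} ν_i(x)·π_i(a|x)·P(x'|x,a) + (1−γ)·ν₀(x') for all x' (i = 1,2). Then Σ_x |ν₁(x) − ν₂(x)| ≤ (γ/(1−γ))·Σ_x ν₂(x)·Σ_a |π₁(a|x) − π₂(a|x)|. -/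
/-- If ν₁, ν₂ are discounted stationary distributions of policies π₁, π₂,
then the ℓ₁ distance between ν₁ and ν₂ is bounded by
(γ/(1−γ))·Σ_x ν₂(x)·Σ_a |π₁(a|x) − π₂(a|x)|. -/
theorem stmt14 {X A : Type*} [Fintype X] [Fintype A] [Nonempty X] [Nonempty A]
    (P : X → A → X → ℝ) (γ : ℝ) (ν₀ : X → ℝ)
    (hP0 : ∀ x a x', 0 ≤ P x a x') (hP1 : ∀ x a, ∑ x', P x a x' = 1)
    (hγ0 : 0 < γ) (hγ1 : γ < 1)
    (hν₀0 : ∀ x, 0 ≤ ν₀ x) (hν₀1 : ∑ x, ν₀ x = 1)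
    (π₁ π₂ : X → A → ℝ)
    (hπ₁0 : ∀ x a, 0 ≤ π₁ x a) (hπ₁1 : ∀ x, ∑ a, π₁ x a = 1)
    (hπ₂0 : ∀ x a, 0 ≤ π₂ x a) (hπ₂1 : ∀ x, ∑ a, π₂ x a = 1)
    (ν₁ ν₂ : X → ℝ)
    (hν₁0 : ∀ x, 0 ≤ ν₁ x) (hν₁1 : ∑ x, ν₁ x = 1)
    (hν₂0 : ∀ x, 0 ≤ ν₂ x) (hν₂1 : ∑ x, ν₂ x = 1)
    (hfix₁ : ∀ x', ν₁ x' = γ * (∑ x, ∑ a, ν₁ x * π₁ x a * P x a x') + (1 - γ) * ν₀ x')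
    (hfix₂ : ∀ x', ν₂ x' = γ * (∑ x, ∑ a, ν₂ x * π₂ x a * P x a x') + (1 - γ) * ν₀ x') :
    ∑ x, |ν₁ x - ν₂ x| ≤ γ / (1 - γ) * ∑ x, ν₂ x * ∑ a, |π₁ x a - π₂ x a| := by
  have h1γ : (0:ℝ) < 1 - γ := by linarith
  set D := ∑ x, |ν₁ x - ν₂ x| with hD
  set E := ∑ x, ν₂ x * ∑ a, |π₁ x a - π₂ x a| with hE
  have key : D ≤ γ * (D + E) := by
    have step1 : ∀ x', |ν₁ x' - ν₂ x'| ≤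
        γ * ∑ x, ∑ a, |ν₁ x * π₁ x a - ν₂ x * π₂ x a| * P x a x' := by
      intro x'
      have : ν₁ x' - ν₂ x' = γ * ∑ x, ∑ a, (ν₁ x * π₁ x a - ν₂ x * π₂ x a) * P x a x' := by
        rw [hfix₁ x', hfix₂ x']
        simp only [sub_mul, Finset.sum_sub_distrib, Finset.mul_sum, mul_assoc, mul_sub]
        ring
      rw [this, abs_mul, abs_of_pos hγ0]
      refine mul_le_mul_of_nonneg_left ?_ hγ0.le
      calc |∑ x, ∑ a, (ν₁ x * π₁ x a - ν₂ x * π₂ x a) * P x a x'|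
          ≤ ∑ x, |∑ a, (ν₁ x * π₁ x a - ν₂ x * π₂ x a) * P x a x'| :=
            Finset.abs_sum_le_sum_abs _ _
        _ ≤ ∑ x, ∑ a, |ν₁ x * π₁ x a - ν₂ x * π₂ x a| * P x a x' := by
            refine Finset.sum_le_sum fun x _ => ?_
            refine (Finset.abs_sum_le_sum_abs _ _).trans ?_
            refine Finset.sum_le_sum fun a _ => ?_
            rw [abs_mul, abs_of_nonneg (hP0 x a x')]
    calc D ≤ ∑ x', γ * ∑ x, ∑ a, |ν₁ x * π₁ x a - ν₂ x * π₂ x a| * P x a x' :=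
          Finset.sum_le_sum fun x' _ => step1 x'
      _ = γ * ∑ x, ∑ a, |ν₁ x * π₁ x a - ν₂ x * π₂ x a| := by
          rw [← Finset.mul_sum]
          congr 1
          rw [Finset.sum_comm]
          refine Finset.sum_congr rfl fun x _ => ?_
          rw [Finset.sum_comm]
          refine Finset.sum_congr rfl fun a _ => ?_
          rw [← Finset.mul_sum, hP1 x a, mul_one]
      _ ≤ γ * (D + E) := by
          refine mul_le_mul_of_nonneg_left ?_ hγ0.le
          have pt : ∀ x, ∑ a, |ν₁ x * π₁ x a - ν₂ x * π₂ x a| ≤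
              |ν₁ x - ν₂ x| + ν₂ x * ∑ a, |π₁ x a - π₂ x a| := by
            intro x
            calc ∑ a, |ν₁ x * π₁ x a - ν₂ x * π₂ x a|
                ≤ ∑ a, (|ν₁ x - ν₂ x| * π₁ x a + ν₂ x * |π₁ x a - π₂ x a|) := by
                  refine Finset.sum_le_sum fun a _ => ?_
                  have : ν₁ x * π₁ x a - ν₂ x * π₂ x a =
                      (ν₁ x - ν₂ x) * π₁ x a + ν₂ x * (π₁ x a - π₂ x a) := by ring
                  rw [this]
                  refine (abs_add_le _ _).trans ?_
                  rw [abs_mul, abs_mul, abs_of_nonneg (hπ₁0 x a), abs_of_nonneg (hν₂0 x)]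
              _ = |ν₁ x - ν₂ x| + ν₂ x * ∑ a, |π₁ x a - π₂ x a| := by
                  rw [Finset.sum_add_distrib, ← Finset.mul_sum, ← Finset.mul_sum,
                    hπ₁1 x, mul_one]
          calc ∑ x, ∑ a, |ν₁ x * π₁ x a - ν₂ x * π₂ x a|
              ≤ ∑ x, (|ν₁ x - ν₂ x| + ν₂ x * ∑ a, |π₁ x a - π₂ x a|) :=
                Finset.sum_le_sum fun x _ => pt x
            _ = D + E := by rw [Finset.sum_add_distrib]
  rw [div_mul_eq_mul_div, le_div_iff₀ h1γ]
  nlinarith [key]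
end

section
/- Let π₁ and π₂ be two policies, let ν₁ and ν₂ be probability distributions on 𝒳 satisfying ν_i(x') = γ·Σ_{x,a} ν_i(x)·π_i(a|x)·P(x'|x,a) + (1−γ)·ν₀(x') for all x' (i = 1,2), and define d_i(x,a) = ν_i(x)·π_i(a|x). Then Σ_{x,a} |d₁(x,a) − d₂(x,a)| ≤ (1/(1−γ))·Σ_x ν₂(x)·Σ_a |π₁(a|x) − π₂(a|x)|. -/
/-- For discounted stationary distributions ν₁, ν₂ of policies π₁, π₂ and
the induced state-action distributions d_i(x,a) = ν_i(x)·π_i(a|x),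
Σ_{x,a} |d₁(x,a) − d₂(x,a)| ≤ (1/(1−γ))·Σ_x ν₂(x)·Σ_a |π₁(a|x) − π₂(a|x)|. -/
theorem stmt15 {X A : Type*} [Fintype X] [Fintype A] [Nonempty X] [Nonempty A]
    (P : X → A → X → ℝ) (γ : ℝ) (ν₀ : X → ℝ)
    (hP0 : ∀ x a x', 0 ≤ P x a x') (hP1 : ∀ x a, ∑ x', P x a x' = 1)
    (hγ0 : 0 < γ) (hγ1 : γ < 1)
    (hν₀0 : ∀ x, 0 ≤ ν₀ x) (hν₀1 : ∑ x, ν₀ x = 1)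
    (π₁ π₂ : X → A → ℝ)
    (hπ₁0 : ∀ x a, 0 ≤ π₁ x a) (hπ₁1 : ∀ x, ∑ a, π₁ x a = 1)
    (hπ₂0 : ∀ x a, 0 ≤ π₂ x a) (hπ₂1 : ∀ x, ∑ a, π₂ x a = 1)
    (ν₁ ν₂ : X → ℝ)
    (hν₁0 : ∀ x, 0 ≤ ν₁ x) (hν₁1 : ∑ x, ν₁ x = 1)
    (hν₂0 : ∀ x, 0 ≤ ν₂ x) (hν₂1 : ∑ x, ν₂ x = 1)
    (hfix₁ : ∀ x', ν₁ x' = γ * (∑ x, ∑ a, ν₁ x * π₁ x a * P x a x') + (1 - γ) * ν₀ x')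
    (hfix₂ : ∀ x', ν₂ x' = γ * (∑ x, ∑ a, ν₂ x * π₂ x a * P x a x') + (1 - γ) * ν₀ x')
    (d₁ d₂ : X → A → ℝ)
    (hd₁ : ∀ x a, d₁ x a = ν₁ x * π₁ x a) (hd₂ : ∀ x a, d₂ x a = ν₂ x * π₂ x a) :
    ∑ x, ∑ a, |d₁ x a - d₂ x a| ≤ 1 / (1 - γ) * ∑ x, ν₂ x * ∑ a, |π₁ x a - π₂ x a| := by

  have hpos : 0 < 1 - γ := by linarith
  set L := ∑ x, ∑ a, |ν₁ x * π₁ x a - ν₂ x * π₂ x a| with hL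
  set S := ∑ x, ν₂ x * ∑ a, |π₁ x a - π₂ x a| with hS
  set D := ∑ x, |ν₁ x - ν₂ x| with hD
  have hLHS : ∑ x, ∑ a, |d₁ x a - d₂ x a| = L := by
    simp [hd₁, hd₂, hL]
  have h1 : L ≤ D + S := by
    rw [hL, hD, hS, ← Finset.sum_add_distrib]
    apply Finset.sum_le_sum
    intro x _
    have step : ∑ a, |ν₁ x * π₁ x a - ν₂ x * π₂ x a| ≤
        ∑ a, (|ν₁ x - ν₂ x| * π₁ x a + ν₂ x * |π₁ x a - π₂ x a|) := by
      apply Finset.sum_le_sum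
      intro a _
      have he : ν₁ x * π₁ x a - ν₂ x * π₂ x a
          = (ν₁ x - ν₂ x) * π₁ x a + ν₂ x * (π₁ x a - π₂ x a) := by ring
      rw [he]
      calc |(ν₁ x - ν₂ x) * π₁ x a + ν₂ x * (π₁ x a - π₂ x a)|
          ≤ |(ν₁ x - ν₂ x) * π₁ x a| + |ν₂ x * (π₁ x a - π₂ x a)| := abs_add_le _ _
        _ = |ν₁ x - ν₂ x| * π₁ x a + ν₂ x * |π₁ x a - π₂ x a| := by
            rw [abs_mul, abs_mul, abs_of_nonneg (hπ₁0 x a), abs_of_nonneg (hν₂0 x)]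
    refine step.trans ?_
    rw [Finset.sum_add_distrib, ← Finset.mul_sum, ← Finset.mul_sum, hπ₁1 x, mul_one]
  have h2 : D ≤ γ * L := by
    have step : ∀ x', |ν₁ x' - ν₂ x'| ≤
        γ * ∑ x, ∑ a, |ν₁ x * π₁ x a - ν₂ x * π₂ x a| * P x a x' := by
      intro x'
      have he : ν₁ x' - ν₂ x'
          = γ * ∑ x, ∑ a, (ν₁ x * π₁ x a - ν₂ x * π₂ x a) * P x a x' := by
        have hsum : ∑ x, ∑ a, (ν₁ x * π₁ x a - ν₂ x * π₂ x a) * P x a x'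
            = (∑ x, ∑ a, ν₁ x * π₁ x a * P x a x')
              - (∑ x, ∑ a, ν₂ x * π₂ x a * P x a x') := by
          rw [← Finset.sum_sub_distrib]
          apply Finset.sum_congr rfl
          intro x _
          rw [← Finset.sum_sub_distrib]
          apply Finset.sum_congr rfl
          intro a _
          ring
        rw [hsum, hfix₁ x', hfix₂ x']
        ring
      calc |ν₁ x' - ν₂ x'|
          = γ * |∑ x, ∑ a, (ν₁ x * π₁ x a - ν₂ x * π₂ x a) * P x a x'| := by
            rw [he, abs_mul, abs_of_pos hγ0]
        _ ≤ γ * ∑ x, ∑ a, |ν₁ x * π₁ x a - ν₂ x * π₂ x a| * P x a x' := by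
            apply mul_le_mul_of_nonneg_left _ hγ0.le
            calc |∑ x, ∑ a, (ν₁ x * π₁ x a - ν₂ x * π₂ x a) * P x a x'|
                ≤ ∑ x, |∑ a, (ν₁ x * π₁ x a - ν₂ x * π₂ x a) * P x a x'| :=
                  Finset.abs_sum_le_sum_abs _ _
              _ ≤ ∑ x, ∑ a, |ν₁ x * π₁ x a - ν₂ x * π₂ x a| * P x a x' := by
                  apply Finset.sum_le_sum
                  intro x _
                  refine (Finset.abs_sum_le_sum_abs _ _).trans ?_
                  apply Finset.sum_le_sum
                  intro a _
                  rw [abs_mul, abs_of_nonneg (hP0 x a x')]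
    calc D ≤ ∑ x', γ * ∑ x, ∑ a, |ν₁ x * π₁ x a - ν₂ x * π₂ x a| * P x a x' :=
          Finset.sum_le_sum fun x' _ => step x'
      _ = γ * L := by
          rw [← Finset.mul_sum, hL]
          congr 1
          rw [Finset.sum_comm]
          apply Finset.sum_congr rfl
          intro x _
          rw [Finset.sum_comm]
          apply Finset.sum_congr rfl
          intro a _
          rw [← Finset.mul_sum, hP1 x a, mul_one]
  rw [hLHS, one_div_mul_eq_div, le_div_iff₀ hpos]
  nlinarith [h1, h2]
end
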